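/- arXiv:1207.5122 — 2 statements merged into one kernel-verified Lean document; each statement's English description precedes it below -/
import Mathlib

section
/- Let G be a finite simple graph with an OCDC 𝒞. If the girth of G is strictly greater than the average degree of G, then 𝒞 consists of at most |V(G)| − 1 directed cycles, i.e., 𝒞 is an SOCDC of G. -/
open SimpleGraph

/-- The list of arcs of a cyclically-read list of vertices:
`[(l₀,l₁), (l₁,l₂), …, (lₙ₋₁,l₀)]`. -/
def cycleArcs {V : Type*} (l : List V) : List (V × V) := l.zip (l.rotate 1)

/-- `l` represents a directed cycle of the symmetric orientation of `G`:
a cyclic sequence of at least three pairwise distinct vertices with consecutive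
vertices adjacent (cyclically). -/
def IsDirCycle {V : Type*} (G : SimpleGraph V) (l : List V) : Prop :=
  3 ≤ l.length ∧ l.Nodup ∧ ∀ p ∈ cycleArcs l, G.Adj p.1 p.2

/-- An oriented cycle double cover of `G` : a collection of directed cycles of the
symmetric orientation of `G` such that each arc `(u,v)` (with `u ~ v` in `G`) lies
in exactly one of the cycles. -/
def IsOCDC {V : Type*} (G : SimpleGraph V) (C : Finset (List V)) : Prop :=
  (∀ l ∈ C, IsDirCycle G l) ∧
    ∀ u v : V, G.Adj u v → ∃! l : List V, l ∈ C ∧ (u, v) ∈ cycleArcs l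

/-- `G` (a graph with vertex set of size `n`) has a small oriented cycle double cover:
an OCDC with at most `n - 1` directed cycles. -/
def HasSOCDC {V : Type*} (G : SimpleGraph V) : Prop :=
  ∃ C : Finset (List V), IsOCDC G C ∧ C.card ≤ Nat.card V - 1

/-- `l` represents a directed path of the symmetric orientation of `G`. -/
def IsDirPath {V : Type*} (G : SimpleGraph V) (l : List V) : Prop :=
  l ≠ [] ∧ l.Nodup ∧ l.Chain' G.Adj

/-- An oriented perfect path double cover of `G`: a collection of directed paths of the
symmetric orientation of `G` such that each arc lies in exactly one path, and every
vertex occurs exactly once as the start and exactly once as the end of a path. -/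
def IsOPPDC {V : Type*} (G : SimpleGraph V) (P : Finset (List V)) : Prop :=
  (∀ l ∈ P, IsDirPath G l) ∧
    (∀ u v : V, G.Adj u v → ∃! l : List V, l ∈ P ∧ (u, v) ∈ l.zip l.tail) ∧
    (∀ v : V, ∃! l : List V, l ∈ P ∧ l.head? = some v) ∧
    (∀ v : V, ∃! l : List V, l ∈ P ∧ l.getLast? = some v)

/-! Each directed cycle of an OCDC has length at least the girth `g`, and the cycles together
use each of the `2|E|` arcs exactly once, so `|C| g ≤ 2|E| < |V| g`. -/

open Finset

namespace SimpleGraph.Walk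

variable {V : Type*} {G : SimpleGraph V}

theorem isCycle_cons_of_isPath {u v : V} (h : G.Adj u v) {p : G.Walk v u} (hp : p.IsPath)
    (hlen : 2 ≤ p.length) : (cons h p).IsCycle :=
  isCycle_iff_isPath_tail_and_le_length.mpr ⟨by simpa using hp, by simpa using hlen⟩

end SimpleGraph.Walk

section CycleArcs

variable {V : Type*}

@[simp]
theorem cycleArcs_length (l : List V) : (cycleArcs l).length = l.length := by
  simp [cycleArcs]

theorem cycleArcs_nodup {l : List V} (hl : l.Nodup) : (cycleArcs l).Nodup := by
  have hfst : (cycleArcs l).map Prod.fst = l := List.map_fst_zip (by simp)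
  exact .of_map Prod.fst (by rwa [hfst])

theorem cycleArcs_cons (a : V) (t : List V) : cycleArcs (a :: t) = (a :: t).zip (t ++ [a]) := by
  rw [cycleArcs, List.rotate_cons_succ, List.rotate_zero]

end CycleArcs

namespace IsDirCycle

variable {V : Type*} {G : SimpleGraph V} {l : List V}

theorem isChain_adj_append_head {a : V} {t : List V} (hl : IsDirCycle G (a :: t)) :
    (a :: t ++ [a]).IsChain G.Adj := by
  rw [List.isChain_cons_append_singleton_iff_forall₂, List.forall₂_iff_zip]
  exact ⟨by simp, fun hp => hl.2.2 _ (cycleArcs_cons a t ▸ hp)⟩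

theorem egirth_le_length (hl : IsDirCycle G l) : G.egirth ≤ l.length := by
  obtain ⟨a, c, t, rfl⟩ : ∃ a c t, l = a :: c :: t := by
    match l, hl.1 with
    | a :: c :: t, _ => exact ⟨a, c, t, rfl⟩
  have hchain : (a :: c :: (t ++ [a])).IsChain G.Adj := by
    simpa using hl.isChain_adj_append_head
  obtain ⟨p, hp⟩ : ∃ p : G.Walk c a, p.support = c :: (t ++ [a]) := by
    refine ⟨(Walk.ofSupport _ (List.cons_ne_nil _ _) hchain.of_cons).copy (List.head_cons ..)
      (by simp), ?_⟩
    rw [Walk.support_copy]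
    exact Walk.support_ofSupport _ _
  have hpath : p.IsPath := by
    rw [Walk.isPath_def, hp]
    exact (List.perm_append_singleton _ _).nodup_iff.mpr hl.2.1
  have hlen : p.length = t.length + 1 := by
    simpa [hp] using p.length_support.symm
  have hcycle := Walk.isCycle_cons_of_isPath hchain.rel hpath (by simpa [hlen] using hl.1)
  calc G.egirth ≤ (Walk.cons hchain.rel p).length := egirth_le_length hcycle
    _ = (a :: c :: t).length := by simp [hlen]

variable [Fintype V] [DecidableRel G.Adj]

theorem card_darts_mem_cycleArcs [DecidableEq V] (hl : IsDirCycle G l) :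
    #{d : G.Dart | d.toProd ∈ cycleArcs l} = l.length := by
  rw [← cycleArcs_length, ← List.toFinset_card_of_nodup (cycleArcs_nodup hl.2.1),
    ← card_image_of_injective _ Dart.toProd_injective]
  congr 1
  ext p
  simp only [mem_image, mem_filter, mem_univ, true_and, List.mem_toFinset]
  exact ⟨fun ⟨d, hd, hdp⟩ => hdp ▸ hd, fun hp => ⟨⟨p, hl.2.2 p hp⟩, hp, rfl⟩⟩

end IsDirCycle

namespace IsOCDC

variable {V : Type*} {G : SimpleGraph V} {C : Finset (List V)}

theorem sum_length_eq_card_dart [Fintype V] [DecidableRel G.Adj] (hC : IsOCDC G C) :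
    ∑ l ∈ C, l.length = Fintype.card G.Dart := by
  classical
  let onCycle : List V → G.Dart → Prop := fun l d => d.toProd ∈ cycleArcs l
  calc ∑ l ∈ C, l.length
      = ∑ l ∈ C, #((univ : Finset G.Dart).bipartiteAbove onCycle l) :=
        sum_congr rfl fun l hl => ((hC.1 l hl).card_darts_mem_cycleArcs).symm
    _ = ∑ d : G.Dart, #(C.bipartiteBelow onCycle d) :=
        sum_card_bipartiteAbove_eq_sum_card_bipartiteBelow _
    _ = ∑ _d : G.Dart, 1 := sum_congr rfl fun d _ => by
        rw [bipartiteBelow, card_eq_one_iff_existsUnique]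
        simpa using hC.2 _ _ d.adj
    _ = Fintype.card G.Dart := by simp

theorem card_mul_egirth_le [Finite V] (hC : IsOCDC G C) :
    (#C : ℕ∞) * G.egirth ≤ 2 * Nat.card G.edgeSet := by
  classical
  have := Fintype.ofFinite V
  calc (#C : ℕ∞) * G.egirth = ∑ _l ∈ C, G.egirth := by simp
    _ ≤ ∑ l ∈ C, (l.length : ℕ∞) := sum_le_sum fun l hl => (hC.1 l hl).egirth_le_length
    _ = ((∑ l ∈ C, l.length : ℕ) : ℕ∞) := by push_cast; rfl
    _ = 2 * Nat.card G.edgeSet := by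
      rw [hC.sum_length_eq_card_dart, dart_card_eq_twice_card_edges, edgeFinset_card,
        Nat.card_eq_fintype_card]
      push_cast; rfl

end IsOCDC

/-- If `G` has an OCDC `C` and the girth of `G` is strictly greater than the average
degree `2|E(G)|/|V(G)|` of `G`, then `C` has at most `|V(G)| - 1` cycles, i.e. `C` is
an SOCDC of `G`. -/
theorem isSOCDC_of_girth_gt_averageDegree {V : Type} [Finite V] (G : SimpleGraph V)
    (C : Finset (List V)) (hC : IsOCDC G C)
    (hgirth : (2 * Nat.card G.edgeSet : ℕ∞) < (Nat.card V : ℕ∞) * G.egirth) :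
    C.card ≤ Nat.card V - 1 := by
  have hlt : C.card < Nat.card V := by
    by_contra! hle
    have hmono : (Nat.card V : ℕ∞) * G.egirth ≤ C.card * G.egirth := by gcongr
    exact (hgirth.trans_le hmono).not_ge hC.card_mul_egirth_le
  omega
end

section
/- For all integers n, m ≥ 2, the complete bipartite graph K_{n,m} has an SOCDC. -/
open SimpleGraph

/-!
For `n ≤ m` and each `c : Fin m`, the closed walk `a₀ b_c a₁ b_{c+1} … a_{n-1} b_{c+n-1}`
(indices of the `b`s taken mod `m`) is a directed cycle of length `2n ≥ 4`; its `b`s are distinct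
because `n ≤ m`. The arc `aᵢ → bⱼ` lies on it exactly when `c = j - i`, and `bⱼ → aᵢ` exactly when
`c = j - (i - 1)`, so these `m ≤ n + m - 1` cycles form an oriented cycle double cover.
The case `m < n` follows by swapping the two sides.
-/

theorem mem_cycleArcs_ofFn {V : Type*} {k : ℕ} [NeZero k] {f : Fin k → V} {p : V × V} :
    p ∈ cycleArcs (List.ofFn f) ↔ ∃ i, p = (f i, f (i + 1)) := by
  have hsucc (i : Fin k) : i + 1 = ⟨(i + 1) % k, Nat.mod_lt _ i.pos⟩ := by
    ext; simp [Fin.val_add]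
  simp only [cycleArcs, List.mem_iff_getElem, List.getElem_zip, List.getElem_rotate,
    List.getElem_ofFn, List.length_zip, List.length_rotate, List.length_ofFn, min_self, hsucc]
  exact ⟨fun ⟨j, hj, hp⟩ => ⟨⟨j, hj⟩, hp.symm⟩, fun ⟨i, hp⟩ => ⟨i, i.isLt, hp.symm⟩⟩

theorem cycleArcs_map {V W : Type*} (f : V → W) (l : List V) :
    cycleArcs (l.map f) = (cycleArcs l).map (Prod.map f f) := by
  rw [cycleArcs, cycleArcs, ← List.map_rotate, List.zip_map]

theorem mem_cycleArcs_map_of_injective {V W : Type*} {f : V → W} (hf : f.Injective)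
    {l : List V} {x y : V} : (f x, f y) ∈ cycleArcs (l.map f) ↔ (x, y) ∈ cycleArcs l := by
  rw [cycleArcs_map, ← Prod.map_apply]
  exact List.mem_map_of_injective (hf.prodMap hf)

theorem Finset.existsUnique_mem_image {α β : Type*} [DecidableEq β] {s : Finset α} {f : α → β}
    {p : β → Prop} (h : ∃! a, a ∈ s ∧ p (f a)) : ∃! b, b ∈ s.image f ∧ p b := by
  obtain ⟨a, ⟨ha, hpa⟩, huniq⟩ := h
  refine ⟨f a, ⟨Finset.mem_image_of_mem f ha, hpa⟩, ?_⟩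
  rintro _ ⟨hb, hpb⟩
  obtain ⟨a', ha', rfl⟩ := Finset.mem_image.1 hb
  rw [huniq a' ⟨ha', hpb⟩]

theorem Fin.exists_eq_two_mul_or_eq_two_mul_add_one {k : ℕ} (j : Fin (2 * k)) :
    ∃ i : Fin k, j = ⟨2 * i, by omega⟩ ∨ j = ⟨2 * i + 1, by omega⟩ :=
  ⟨⟨j / 2, by omega⟩, by simp only [Fin.ext_iff]; omega⟩

/-- The cyclic sequence `a₀ b₀ a₁ b₁ … a_{k-1} b_{k-1}`. -/
def alternating {V : Type*} {k : ℕ} (a b : Fin k → V) (j : Fin (2 * k)) : V :=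
  if j.val % 2 = 0 then a ⟨j / 2, by omega⟩ else b ⟨j / 2, by omega⟩

section alternating

variable {V : Type*} {k : ℕ} {a b : Fin k → V}

theorem alternating_two_mul (i : Fin k) : alternating a b ⟨2 * i, by omega⟩ = a i := by
  simp [alternating]

theorem alternating_two_mul_add_one (i : Fin k) :
    alternating a b ⟨2 * i + 1, by omega⟩ = b i := by
  simp [alternating, Nat.add_div]

theorem alternating_injective (ha : a.Injective) (hb : b.Injective) (hab : ∀ i j, a i ≠ b j) :
    (alternating a b).Injective := by
  intro j j' h
  obtain ⟨i, rfl | rfl⟩ := Fin.exists_eq_two_mul_or_eq_two_mul_add_one j <;>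
  obtain ⟨i', rfl | rfl⟩ := Fin.exists_eq_two_mul_or_eq_two_mul_add_one j' <;>
  simp only [alternating_two_mul, alternating_two_mul_add_one] at h
  · rw [ha h]
  · exact absurd h (hab i i')
  · exact absurd h.symm (hab i' i)
  · rw [hb h]

variable [NeZero k]

theorem mem_cycleArcs_alternating {p : V × V} :
    p ∈ cycleArcs (List.ofFn (alternating a b)) ↔
      ∃ i, p = (a i, b i) ∨ p = (b i, a (i + 1)) := by
  have h_even (i : Fin k) : (⟨2 * i, by omega⟩ : Fin (2 * k)) + 1 = ⟨2 * i + 1, by omega⟩ := by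
    ext; simp [Fin.val_add, Nat.mod_eq_of_lt (show 2 * i.val + 1 < 2 * k by omega)]
  have h_odd (i : Fin k) : (⟨2 * i + 1, by omega⟩ : Fin (2 * k)) + 1 =
      ⟨2 * ↑(i + 1), by have := (i + 1).isLt; omega⟩ := by
    ext; simp [Fin.val_add, ← Nat.mul_mod_mul_left, mul_add]
  rw [mem_cycleArcs_ofFn]
  constructor
  · rintro ⟨j, rfl⟩
    obtain ⟨i, rfl | rfl⟩ := Fin.exists_eq_two_mul_or_eq_two_mul_add_one j
    · exact ⟨i, .inl (by rw [h_even, alternating_two_mul, alternating_two_mul_add_one])⟩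
    · exact ⟨i, .inr (by rw [h_odd, alternating_two_mul, alternating_two_mul_add_one])⟩
  · rintro ⟨i, rfl | rfl⟩
    · exact ⟨⟨2 * i, by omega⟩, by rw [h_even, alternating_two_mul, alternating_two_mul_add_one]⟩
    · exact ⟨⟨2 * i + 1, by omega⟩,
        by rw [h_odd, alternating_two_mul, alternating_two_mul_add_one]⟩

theorem isDirCycle_alternating {G : SimpleGraph V} (hk : 2 ≤ k) (ha : a.Injective)
    (hb : b.Injective) (hab : ∀ i j, a i ≠ b j) (hadj : ∀ i, G.Adj (a i) (b i))
    (hadj' : ∀ i, G.Adj (b i) (a (i + 1))) : IsDirCycle G (List.ofFn (alternating a b)) := by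
  refine ⟨by simp; omega, List.nodup_ofFn.2 (alternating_injective ha hb hab), ?_⟩
  intro p hp
  obtain ⟨i, rfl | rfl⟩ := mem_cycleArcs_alternating.1 hp
  exacts [hadj i, hadj' i]

end alternating

section map

variable {V W : Type*} {G : SimpleGraph V} {H : SimpleGraph W}

theorem IsDirCycle.map (f : G ↪g H) {l : List V} (hl : IsDirCycle G l) :
    IsDirCycle H (l.map f) := by
  obtain ⟨hlen, hnodup, hadj⟩ := hl
  refine ⟨by rwa [List.length_map], hnodup.map f.injective, ?_⟩
  rw [cycleArcs_map]
  rintro _ hp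
  obtain ⟨⟨x, y⟩, hxy, rfl⟩ := List.mem_map.1 hp
  exact f.map_adj_iff.2 (hadj _ hxy)

theorem IsOCDC.map [DecidableEq W] (e : G ≃g H) {C : Finset (List V)} (hC : IsOCDC G C) :
    IsOCDC H (C.image (List.map e)) := by
  obtain ⟨hcyc, hcov⟩ := hC
  refine ⟨?_, ?_⟩
  · simp only [Finset.mem_image, forall_exists_index, and_imp]
    rintro _ l hl rfl
    exact (hcyc l hl).map e.toEmbedding
  · intro u v huv
    obtain ⟨x, rfl⟩ := e.surjective u
    obtain ⟨y, rfl⟩ := e.surjective v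
    apply Finset.existsUnique_mem_image
    simpa only [mem_cycleArcs_map_of_injective e.injective] using hcov x y (e.map_adj_iff.1 huv)

theorem HasSOCDC.map (e : G ≃g H) (hG : HasSOCDC G) : HasSOCDC H := by
  classical
  obtain ⟨C, hC, hcard⟩ := hG
  refine ⟨_, hC.map e, Finset.card_image_le.trans ?_⟩
  rwa [← Nat.card_congr e.toEquiv]

end map

def completeBipartiteGraphComm (V W : Type*) :
    completeBipartiteGraph V W ≃g completeBipartiteGraph W V where
  __ := Equiv.sumComm V W
  map_rel_iff' := by rintro (a | a) (b | b) <;> simp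

section bipartite

variable {n m : ℕ} [NeZero n] [NeZero m] (h : n ≤ m)

def bipartiteCycle (c : Fin m) : List (Fin n ⊕ Fin m) :=
  List.ofFn (alternating Sum.inl fun i => Sum.inr (c + Fin.castLE h i))

theorem inl_inr_mem_cycleArcs_bipartiteCycle {c : Fin m} {i : Fin n} {j : Fin m} :
    (Sum.inl i, Sum.inr j) ∈ cycleArcs (bipartiteCycle h c) ↔ c = j - Fin.castLE h i := by
  simp [bipartiteCycle, mem_cycleArcs_alternating, eq_sub_iff_add_eq, eq_comm]

theorem inr_inl_mem_cycleArcs_bipartiteCycle {c : Fin m} {i : Fin n} {j : Fin m} :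
    (Sum.inr j, Sum.inl i) ∈ cycleArcs (bipartiteCycle h c) ↔ c = j - Fin.castLE h (i - 1) := by
  simp only [bipartiteCycle, mem_cycleArcs_alternating, Prod.mk.injEq, reduceCtorEq, false_and,
    Sum.inr.injEq, Sum.inl.injEq, false_or]
  constructor
  · rintro ⟨i, rfl, rfl⟩
    simp
  · rintro rfl
    exact ⟨i - 1, by simp, by simp⟩

theorem isOCDC_bipartiteCycle (hn : 2 ≤ n) :
    IsOCDC (completeBipartiteGraph (Fin n) (Fin m)) (Finset.univ.image (bipartiteCycle h)) := by
  refine ⟨?_, ?_⟩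
  · simp only [Finset.mem_image, Finset.mem_univ, true_and, forall_exists_index]
    rintro _ c rfl
    refine isDirCycle_alternating hn Sum.inl_injective ?_ (by simp) (by simp) (by simp)
    exact Sum.inr_injective.comp ((add_right_injective c).comp (Fin.castLE_injective h))
  · rintro (i | j) (i' | j') hadj
    · simp at hadj
    · exact Finset.existsUnique_mem_image (by simp [inl_inr_mem_cycleArcs_bipartiteCycle])
    · exact Finset.existsUnique_mem_image (by simp [inr_inl_mem_cycleArcs_bipartiteCycle])
    · simp at hadj

end bipartite

theorem hasSOCDC_completeBipartiteGraph_of_le {n m : ℕ} (hn : 2 ≤ n) (h : n ≤ m) :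
    HasSOCDC (completeBipartiteGraph (Fin n) (Fin m)) := by
  have : NeZero n := ⟨by omega⟩
  have : NeZero m := ⟨by omega⟩
  refine ⟨_, isOCDC_bipartiteCycle h hn, Finset.card_image_le.trans ?_⟩
  simp only [Finset.card_univ, Fintype.card_fin, Nat.card_eq_fintype_card, Fintype.card_sum]
  omega

/-- For all `n, m ≥ 2`, the complete bipartite graph `K_{n,m}` has an SOCDC. -/
theorem hasSOCDC_completeBipartiteGraph (n m : ℕ) (hn : 2 ≤ n) (hm : 2 ≤ m) :
    HasSOCDC (completeBipartiteGraph (Fin n) (Fin m)) := by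
  rcases le_total n m with h | h
  · exact hasSOCDC_completeBipartiteGraph_of_le hn h
  · exact (hasSOCDC_completeBipartiteGraph_of_le hm h).map (completeBipartiteGraphComm _ _)
end
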